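/- The quantum determinant is the explicit central scalar function: for all λ ∈ ℂ, T_n^{(K)}(λ) = det K · ∏_{b=1}^N [ (λ − ξ_b + η) ∏_{m=1}^{n−1} (λ − ξ_b − mη) ] · Id_H. -/

import Mathlib

open Matrix BigOperators

noncomputable section

namespace GLnSoV

/-- The permutation operator on `ℂ^n ⊗ ℂ^n`. -/
def permOp (n : ℕ) : Matrix (Fin n × Fin n) (Fin n × Fin n) ℂ :=
  Matrix.of fun p q => if p.1 = q.2 ∧ p.2 = q.1 then (1 : ℂ) else 0

/-- The rational `gl_n` R-matrix `R(λ) = λ·Id + η·P`. -/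
def Rmat (n : ℕ) (η lam : ℂ) : Matrix (Fin n × Fin n) (Fin n × Fin n) ℂ :=
  lam • (1 : Matrix (Fin n × Fin n) (Fin n × Fin n) ℂ) + η • permOp n

/-- `R(λ)` acting on the `a`-th and `b`-th factors of a tensor product of copies of `ℂ^n`. -/
def Rab (n : ℕ) (η : ℂ) {ι : Type} [Fintype ι] [DecidableEq ι] (a b : ι) (lam : ℂ) :
    Matrix (ι → Fin n) (ι → Fin n) ℂ :=
  Matrix.of fun x y =>
    Rmat n η lam (x a, x b) (y a, y b) *
      ∏ c ∈ Finset.univ.filter (fun c => c ≠ a ∧ c ≠ b), (if x c = y c then (1 : ℂ) else 0)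

/-- `R(λ)` acting on the auxiliary space and the `j`-th site of the quantum space. -/
def Raux (n N : ℕ) (η : ℂ) (lam : ℂ) (j : Fin N) :
    Matrix (Fin n × (Fin N → Fin n)) (Fin n × (Fin N → Fin n)) ℂ :=
  Matrix.of fun p q =>
    Rmat n η lam (p.1, p.2 j) (q.1, q.2 j) *
      ∏ c ∈ Finset.univ.filter (fun c => c ≠ j), (if p.2 c = q.2 c then (1 : ℂ) else 0)

/-- The twist matrix `K` acting on the auxiliary space. -/
def Kaux (n N : ℕ) (K : Matrix (Fin n) (Fin n) ℂ) :
    Matrix (Fin n × (Fin N → Fin n)) (Fin n × (Fin N → Fin n)) ℂ :=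
  Matrix.of fun p q => K p.1 q.1 * (if p.2 = q.2 then (1 : ℂ) else 0)

/-- The twisted monodromy matrix `M^{(K)}(λ) = K_a R_{a,N}(λ-ξ_N) ⋯ R_{a,1}(λ-ξ_1)`. -/
def monodromy (n N : ℕ) (η : ℂ) (ξ : Fin N → ℂ) (K : Matrix (Fin n) (Fin n) ℂ) (lam : ℂ) :
    Matrix (Fin n × (Fin N → Fin n)) (Fin n × (Fin N → Fin n)) ℂ :=
  Kaux n N K * (List.ofFn (fun j : Fin N => Raux n N η (lam - ξ j.rev) j.rev)).prod

/-- The operator permuting the tensor factors of `(ℂ^n)^{⊗m}` according to `π`. -/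
def permTensorOp (n m : ℕ) (π : Equiv.Perm (Fin m)) :
    Matrix (Fin m → Fin n) (Fin m → Fin n) ℂ :=
  Matrix.of fun v w => if v = w ∘ π then (1 : ℂ) else 0

/-- The antisymmetrizer `P⁻_{1…m}` on `(ℂ^n)^{⊗m}`. -/
def antisym (n m : ℕ) : Matrix (Fin m → Fin n) (Fin m → Fin n) ℂ :=
  (m.factorial : ℂ)⁻¹ •
    ∑ π : Equiv.Perm (Fin m), ((Equiv.Perm.sign π : ℤ) : ℂ) • permTensorOp n m π

/-- The monodromy matrix with the `j`-th copy of `(ℂ^n)^{⊗m}` as auxiliary space. -/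
def MauxJ (n N : ℕ) (η : ℂ) (ξ : Fin N → ℂ) (K : Matrix (Fin n) (Fin n) ℂ) (m : ℕ)
    (j : Fin m) (lam : ℂ) :
    Matrix ((Fin m → Fin n) × (Fin N → Fin n)) ((Fin m → Fin n) × (Fin N → Fin n)) ℂ :=
  Matrix.of fun p q =>
    monodromy n N η ξ K lam (p.1 j, p.2) (q.1 j, q.2) *
      ∏ c ∈ Finset.univ.filter (fun c => c ≠ j), (if p.1 c = q.1 c then (1 : ℂ) else 0)

/-- The antisymmetrizer tensored with the identity of the quantum space. -/
def antisymH (n N m : ℕ) :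
    Matrix ((Fin m → Fin n) × (Fin N → Fin n)) ((Fin m → Fin n) × (Fin N → Fin n)) ℂ :=
  Matrix.of fun p q => antisym n m p.1 q.1 * (if p.2 = q.2 then (1 : ℂ) else 0)

/-- The fused transfer matrix `T_m^{(K)}(λ)`, the trace over the `m` auxiliary copies of `ℂ^n`
of `P⁻_{1…m} M₁(λ) M₂(λ-η) ⋯ M_m(λ-(m-1)η)`. -/
def transfer (n N : ℕ) (η : ℂ) (ξ : Fin N → ℂ) (K : Matrix (Fin n) (Fin n) ℂ)
    (m : ℕ) (lam : ℂ) : Matrix (Fin N → Fin n) (Fin N → Fin n) ℂ :=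
  Matrix.of fun x y =>
    ∑ v : Fin m → Fin n,
      (antisymH n N m *
        (List.ofFn (fun j : Fin m => MauxJ n N η ξ K m j (lam - (j : ℕ) * η))).prod)
        (v, x) (v, y)

/-- `K ⊗ ⋯ ⊗ K` on `(ℂ^n)^{⊗m}`. -/
def Ktensor (n : ℕ) (K : Matrix (Fin n) (Fin n) ℂ) (m : ℕ) :
    Matrix (Fin m → Fin n) (Fin m → Fin n) ℂ :=
  Matrix.of fun v w => ∏ j, K (v j) (w j)

/-- The asymptotic coefficient `tr(P⁻_{1…m} K₁ ⋯ K_m)`. -/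
def asymCoef (n : ℕ) (K : Matrix (Fin n) (Fin n) ℂ) (m : ℕ) : ℂ :=
  (antisym n m * Ktensor n K m).trace

/-- The scalar quantum determinant. -/
def qdet (n N : ℕ) (η : ℂ) (ξ : Fin N → ℂ) (K : Matrix (Fin n) (Fin n) ℂ) (lam : ℂ) : ℂ :=
  K.det * ∏ b, ((lam - ξ b + η) * ∏ m ∈ Finset.Icc 1 (n - 1), (lam - ξ b - (m : ℂ) * η))

/-- The candidate eigenvalue function `t₁^{(K,x)}(λ)`. -/
def t1fun (n N : ℕ) (ξ : Fin N → ℂ) (K : Matrix (Fin n) (Fin n) ℂ) (x : Fin N → ℂ)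
    (lam : ℂ) : ℂ :=
  K.trace * ∏ a, (lam - ξ a) +
    ∑ a, x a * ∏ b ∈ Finset.univ.erase a, (lam - ξ b) / (ξ a - ξ b)

/-- The interpolation coefficients `g_a^{(m+1)}(λ)` (second argument is `m`). -/
def gfun (N : ℕ) (η : ℂ) (ξ : Fin N → ℂ) (m : ℕ) (a : Fin N) (lam : ℂ) : ℂ :=
  (∏ b ∈ Finset.univ.erase a, (lam - ξ b) / (ξ a - ξ b)) *
    ∏ b, ∏ r ∈ Finset.Icc 1 m, (ξ a - ξ b - (r : ℂ) * η)⁻¹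

/-- The candidate eigenvalue functions `t_m^{(K,x)}(λ)`, defined recursively. -/
def tfun (n N : ℕ) (η : ℂ) (ξ : Fin N → ℂ) (K : Matrix (Fin n) (Fin n) ℂ)
    (x : Fin N → ℂ) : ℕ → ℂ → ℂ
  | 0, _ => 1
  | 1, lam => t1fun n N ξ K x lam
  | m + 2, lam =>
      (∏ b, ∏ r ∈ Finset.Icc 1 (m + 1), (lam - ξ b - (r : ℂ) * η)) *
        (asymCoef n K (m + 2) * ∏ b, (lam - ξ b) +
          ∑ a, gfun N η ξ (m + 1) a lam * x a * tfun n N η ξ K x (m + 1) (ξ a - η))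

/-- The SoV operator `∏_{a} (T₁^{(K)}(ξ_a))^{h_a}`. -/
def sovOp (n N : ℕ) (η : ℂ) (ξ : Fin N → ℂ) (K : Matrix (Fin n) (Fin n) ℂ)
    (h : Fin N → Fin n) : Matrix (Fin N → Fin n) (Fin N → Fin n) ℂ :=
  (List.ofFn (fun a : Fin N => transfer n N η ξ K 1 (ξ a) ^ (h a : ℕ))).prod

/-- The SoV covector `⟨h| = ⟨S| ∏_a (T₁^{(K)}(ξ_a))^{h_a}`. -/
def sovCovector (n N : ℕ) (η : ℂ) (ξ : Fin N → ℂ) (K : Matrix (Fin n) (Fin n) ℂ)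
    (S : (Fin N → Fin n) → ℂ) (h : Fin N → Fin n) : (Fin N → Fin n) → ℂ :=
  S ᵥ* sovOp n N η ξ K h

/-- The SoV basis hypothesis: the covectors `⟨h|` form a basis of the dual space. -/
def sovBasisHyp (n N : ℕ) (η : ℂ) (ξ : Fin N → ℂ) (K : Matrix (Fin n) (Fin n) ℂ)
    (S : (Fin N → Fin n) → ℂ) : Prop :=
  ∃ B : Module.Basis (Fin N → Fin n) ℂ ((Fin N → Fin n) → ℂ),
    ∀ h, B h = sovCovector n N η ξ K S h

/-- The coefficient `α₁(λ) = ᾱ ∏_a (λ + η - ξ_a)`. -/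
def alpha1 (N : ℕ) (η : ℂ) (ξ : Fin N → ℂ) (abar lam : ℂ) : ℂ :=
  abar * ∏ a, (lam + η - ξ a)

/-- The coefficients `α_b(λ)` of the quantum spectral curve. -/
def alphaF (N : ℕ) (η : ℂ) (ξ : Fin N → ℂ) (abar : ℂ) : ℕ → ℂ → ℂ
  | 0, _ => -1
  | j + 1, lam =>
      (-1 : ℂ) ^ j * ∏ h ∈ Finset.range (j + 1), alpha1 N η ξ abar (lam - (h : ℂ) * η)


/-!
Let `ε` be the Levi-Civita symbol on `(ℂⁿ)^{⊗n}`. Then `P⁻ = (1/n!) |ε⟩⟨ε|`, so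
`T_n(λ) = (1/n!) ⟨ε| M₁(λ) ⋯ M_n(λ - (n-1)η) |ε⟩`. Operators on different auxiliary copies and
different sites commute, which reorders the product into
`K^{⊗n} · ∏_b R_{a₁ b}(λ - ξ_b) ⋯ R_{a_n b}(λ - ξ_b - (n-1)η)`. Here `K^{⊗n} ε = det K · ε`,
and each site factor maps `ε ⊗ h` to `(λ - ξ_b + η) ∏_{m=1}^{n-1} (λ - ξ_b - mη) · ε ⊗ h`:
peeling off one `R = λ + ηP` at a time, the permutation parts only produce the vectors
`P_{a_i b}(ε ⊗ h)`, since a further `P_{a_k b}` acts on these as the transposition of the slots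
`i, k`, that is by `-1`; in the end these vectors add up to `ε ⊗ h` by the cofactor expansion
of a determinant. Finally `⟨ε|ε⟩ = n!`.
-/

open Equiv Function
open scoped Kronecker

section LeviCivita

variable {ι R : Type*} [Fintype ι] [DecidableEq ι] [CommRing R]

/-- The determinant of the matrix with rows `e_{u i}`: the sign of `u` if `u` is a permutation,
and `0` otherwise. -/
def leviCivita (u : ι → ι) : R := ((1 : Matrix ι ι R).submatrix u id).det

lemma leviCivita_perm (σ : Perm ι) : leviCivita σ = (Perm.sign σ : R) := by
  rw [leviCivita, det_permute, det_one, mul_one]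

lemma leviCivita_eq_zero_of_not_injective {u : ι → ι} (hu : ¬ Injective u) :
    leviCivita u = (0 : R) := by
  obtain ⟨i, j, hij, hne⟩ := not_injective_iff.mp hu
  exact det_zero_of_row_eq hne (funext fun k => congrArg (fun a => (1 : Matrix ι ι R) a k) hij)

lemma leviCivita_comp_swap {i k : ι} (hik : i ≠ k) (u : ι → ι) :
    leviCivita (u ∘ swap i k) = -(leviCivita u : R) := by
  change (((1 : Matrix ι ι R).submatrix u id).submatrix (swap i k) id).det = _
  rw [det_permute, Perm.sign_swap hik, leviCivita]
  simp

lemma sum_leviCivita_mul (F : (ι → ι) → R) :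
    ∑ u, leviCivita u * F u = ∑ σ : Perm ι, (Perm.sign σ : R) * F σ := by
  refine (Fintype.sum_of_injective (fun σ : Perm ι => ⇑σ) DFunLike.coe_injective _ _
    (fun u hu => ?_) (fun σ => by rw [leviCivita_perm])).symm
  rw [leviCivita_eq_zero_of_not_injective
    (fun hinj => hu ⟨ofBijective u hinj.bijective_of_finite, rfl⟩), zero_mul]

lemma sum_leviCivita_mul_self :
    ∑ u : ι → ι, leviCivita u * leviCivita u = ((Fintype.card ι).factorial : R) := by
  have hsq (σ : Perm ι) : (Perm.sign σ : R) * Perm.sign σ = 1 := by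
    rw [← Int.cast_mul, ← Units.val_mul, Int.units_mul_self, Units.val_one, Int.cast_one]
  simp [sum_leviCivita_mul, leviCivita_perm, hsq, Fintype.card_perm]

lemma sum_sign_mul_prod (A : Matrix ι ι R) (u : ι → ι) :
    ∑ σ : Perm ι, (Perm.sign σ : R) * ∏ j, A (u j) (σ j) = leviCivita u * A.det := by
  have hrows : A.submatrix u id = (1 : Matrix ι ι R).submatrix u id * A := by
    ext i j
    simp [mul_apply, one_apply]
  rw [leviCivita, ← det_mul, ← hrows, ← det_transpose, det_apply]
  simp [Units.smul_def]

lemma sum_leviCivita_mul_prod (A : Matrix ι ι R) (u : ι → ι) :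
    ∑ w, leviCivita w * ∏ j, A (u j) (w j) = leviCivita u * A.det := by
  rw [sum_leviCivita_mul, sum_sign_mul_prod]

lemma sum_sign_mul_ite_comp (v w : ι → ι) :
    ∑ π : Perm ι, (Perm.sign π : R) * (if v = w ∘ π then 1 else 0) =
      leviCivita v * leviCivita w := by
  have hw : ((1 : Matrix ι ι R).submatrix id w).det = leviCivita w := by
    rw [leviCivita, ← det_transpose, transpose_submatrix, transpose_one]
  rw [← hw, ← sum_sign_mul_prod]
  refine Finset.sum_congr rfl fun π _ => ?_
  simp [Finset.prod_ite_zero, one_apply, funext_iff]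

lemma sum_ite_mul_leviCivita_update (u : ι → ι) (s t : ι) :
    ∑ i, (if u i = t then 1 else 0) * leviCivita (update u i s) =
      leviCivita u * (if s = t then (1 : R) else 0) := by
  set M := (1 : Matrix ι ι R).submatrix u id
  have hcofactor (i : ι) : leviCivita (update u i s) = M.adjugate s i := by
    rw [adjugate_apply, leviCivita]
    congr 1
    ext i' j
    by_cases hi : i' = i <;> simp [M, hi, one_apply, Pi.single_apply, eq_comm]
  calc _ = (M.adjugate * M) s t := by simp [mul_apply, hcofactor, M, one_apply, mul_comm]
    _ = _ := by rw [adjugate_mul]; simp [one_apply]; rfl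

end LeviCivita

section ListProd

variable {M : Type*} [Monoid M]

lemma List.prod_ofFn_mul_prod_ofFn {k : ℕ} {f g : Fin k → M}
    (h : ∀ i i', i ≠ i' → Commute (g i) (f i')) :
    (List.ofFn f).prod * (List.ofFn g).prod = (List.ofFn fun i => f i * g i).prod := by
  induction k with
  | zero => simp
  | succ k ih =>
    have hg : Commute (g 0) (List.ofFn fun i => f i.succ).prod :=
      Commute.list_prod_right _ _ fun a ha => by
        obtain ⟨i, rfl⟩ := List.mem_ofFn.mp ha
        exact h 0 i.succ (Fin.succ_ne_zero i).symm
    simp only [List.ofFn_succ, List.prod_cons]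
    rw [← ih fun i i' hii' => h i.succ i'.succ (Fin.succ_injective _ |>.ne hii'), mul_assoc,
      ← mul_assoc _ (g 0), ← hg.eq, mul_assoc, mul_assoc]

lemma List.prod_ofFn_prod_ofFn_comm {k l : ℕ} (X : Fin k → Fin l → M)
    (h : ∀ i i' j j', i ≠ i' → j ≠ j' → Commute (X i j) (X i' j')) :
    (List.ofFn fun i => (List.ofFn (X i)).prod).prod =
      (List.ofFn fun j => (List.ofFn fun i => X i j).prod).prod := by
  induction k with
  | zero => simp
  | succ k ih =>
    rw [List.ofFn_succ, List.prod_cons, ih (fun i => X i.succ) fun i i' j j' hii' hjj' =>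
        h _ _ _ _ (Fin.succ_injective _ |>.ne hii') hjj',
      List.prod_ofFn_mul_prod_ofFn fun j j' hjj' => ?_]
    · simp [List.ofFn_succ]
    · exact Commute.list_prod_left _ _ fun a ha => by
        obtain ⟨i, rfl⟩ := List.mem_ofFn.mp ha
        exact h _ _ _ _ (Fin.succ_ne_zero i) hjj'

lemma List.prod_ofFn_mulSingle {n : ℕ} (x : Fin n → M) :
    (List.ofFn fun i => Pi.mulSingle i (x i)).prod = x := by
  conv_rhs => rw [← Finset.noncommProd_mulSingle x]
  simp only [Finset.noncommProd, Fin.univ_val_map, Multiset.noncommProd_coe]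

end ListProd

lemma List.prod_ofFn_mulVec {R m : Type*} [CommSemiring R] [Fintype m] [DecidableEq m] {k : ℕ}
    {X : Fin k → Matrix m m R} {c : Fin k → R} {v : m → R} (h : ∀ i, X i *ᵥ v = c i • v) :
    (List.ofFn X).prod *ᵥ v = (∏ i, c i) • v := by
  induction k with
  | zero => simp
  | succ k ih =>
    rw [List.ofFn_succ, List.prod_cons, ← mulVec_mulVec, ih fun i => h i.succ, mulVec_smul, h 0,
      smul_smul, Fin.prod_univ_succ, mul_comm]

section TensorOps

variable {R α Q ι m : Type*} [CommSemiring R] [Fintype α] [DecidableEq α] [Fintype Q]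
  [DecidableEq Q] [Fintype ι] [DecidableEq ι] [Fintype m] [DecidableEq m]

variable (Q) in
def kroneckerOne : Matrix m m R →* Matrix (m × Q) (m × Q) R where
  toFun A := A ⊗ₖ 1
  map_one' := one_kronecker_one
  map_mul' A B := by simpa using mul_kronecker_mul A B (1 : Matrix Q Q R) 1

@[simp] lemma kroneckerOne_apply (A : Matrix m m R) (a b : m) (x y : Q) :
    kroneckerOne Q A (a, x) (b, y) = A a b * if x = y then 1 else 0 := by
  simp [kroneckerOne, one_apply]

def piTensor : (ι → Matrix α α R) →* Matrix (ι → α) (ι → α) R where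
  toFun A := of fun x y => ∏ i, A i (x i) (y i)
  map_one' := by
    ext x y
    simp [one_apply, Finset.prod_ite_zero, funext_iff]
  map_mul' A B := by
    ext x y
    simp only [of_apply, Pi.mul_apply, mul_apply, Fintype.prod_sum, ← Finset.prod_mul_distrib]

variable (Q) in
def auxSplit (j : ι) : (ι → α) × Q ≃ (α × Q) × ({c // c ≠ j} → α) :=
  ((piSplitAt j fun _ => α).prodCongr (Equiv.refl Q)).trans <| (prodAssoc _ _ _).trans <|
    ((Equiv.refl α).prodCongr (prodComm _ _)).trans (prodAssoc _ _ _).symm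

/-- An operator on `ℂⁿ ⊗ H` acting on the `j`-th of several auxiliary copies of `ℂⁿ`. -/
def embAux (j : ι) : Matrix (α × Q) (α × Q) R →* Matrix ((ι → α) × Q) ((ι → α) × Q) R where
  toFun A := (kroneckerOne _ A).submatrix (auxSplit Q j) (auxSplit Q j)
  map_one' := by simp
  map_mul' A B := by simp [submatrix_mul_equiv]

@[simp] lemma embAux_apply (j : ι) (A : Matrix (α × Q) (α × Q) R) (u w : ι → α) (x y : Q) :
    embAux j A (u, x) (w, y) = A (u j, x) (w j, y) * if ∀ c ≠ j, u c = w c then 1 else 0 := by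
  simp [embAux, auxSplit, kroneckerOne, one_apply, funext_iff]

lemma embAux_kroneckerOne (j : ι) (A : Matrix α α R) :
    embAux j (kroneckerOne Q A) = kroneckerOne Q (piTensor (Pi.mulSingle j A)) := by
  ext ⟨u, x⟩ ⟨w, y⟩
  have hoff : ∏ c ∈ {j}ᶜ, (Pi.mulSingle j A : ι → Matrix α α R) c (u c) (w c) =
      if ∀ c ≠ j, u c = w c then (1 : R) else 0 := by
    rw [Finset.prod_congr rfl fun c hc => by
      rw [Pi.mulSingle_eq_of_ne (by simpa using hc), one_apply], Finset.prod_boole]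
    simp
  simp [piTensor, Fintype.prod_eq_mul_prod_compl j, hoff]
  split_ifs <;> rfl

lemma prod_embAux_kroneckerOne {n : ℕ} (A : Matrix α α R) :
    (List.ofFn fun j : Fin n => embAux j (kroneckerOne Q A)).prod =
      kroneckerOne Q (piTensor fun _ => A) := by
  have hmap : (List.ofFn fun j : Fin n => embAux j (kroneckerOne Q A)) =
      (List.ofFn fun j => Pi.mulSingle j A).map ((kroneckerOne Q).comp piTensor) := by
    simp [List.map_ofFn, Function.comp_def, embAux_kroneckerOne]
  rw [hmap, ← map_list_prod, List.prod_ofFn_mulSingle (fun _ => A)]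
  rfl

end TensorOps

section SiteOperators

variable {R α ι κ : Type*} [DecidableEq ι] [DecidableEq κ]

/-- The permutation of basis vectors `P_{a_j b}` exchanging the auxiliary copy `j` with the
site `b`. -/
def auxSwap (j : ι) (b : κ) : Perm ((ι → α) × (κ → α)) :=
  Involutive.toPerm (fun p => (update p.1 j (p.2 b), update p.2 b (p.1 j))) fun p => by simp

@[simp] lemma auxSwap_apply (j : ι) (b : κ) (u : ι → α) (x : κ → α) :
    auxSwap j b (u, x) = (update u j (x b), update x b (u j)) := rfl

lemma auxSwap_commute {j j' : ι} {b b' : κ} (hj : j ≠ j') (hb : b ≠ b') :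
    Commute (auxSwap (α := α) j b) (auxSwap j' b') := by
  ext ⟨u, x⟩ <;> simp [Perm.mul_apply, update_of_ne hj, update_of_ne hj.symm, update_of_ne hb,
    update_of_ne hb.symm, update_comm hj, update_comm hb]

variable [Fintype α] [DecidableEq α] [Fintype ι] [Fintype κ] [CommRing R]

def auxSiteR (η μ : R) (j : ι) (b : κ) : Matrix ((ι → α) × (κ → α)) ((ι → α) × (κ → α)) R :=
  μ • 1 + η • (auxSwap j b).permMatrix R

lemma auxSiteR_mulVec (η μ : R) (j : ι) (b : κ) (v : (ι → α) × (κ → α) → R) :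
    auxSiteR η μ j b *ᵥ v = μ • v + η • (v ∘ auxSwap j b) := by
  rw [auxSiteR, add_mulVec, smul_mulVec, smul_mulVec, one_mulVec, permMatrix_mulVec]

lemma commute_permMatrix_of_invariant {m : Type*} [Fintype m] [DecidableEq m] {A : Matrix m m R}
    {σ : Perm m} (h : ∀ p q, A (σ p) (σ q) = A p q) : Commute A (σ.permMatrix R) := by
  ext p q
  rw [PEquiv.mul_toMatrix_toPEquiv, PEquiv.toMatrix_toPEquiv_mul, submatrix_apply,
    submatrix_apply, id, id, ← h p (σ.symm q), apply_symm_apply]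

lemma commute_auxSiteR_of_permMatrix {A : Matrix ((ι → α) × (κ → α)) ((ι → α) × (κ → α)) R}
    {j : ι} {b : κ} (h : Commute A ((auxSwap j b).permMatrix R)) (η μ : R) :
    Commute A (auxSiteR η μ j b) :=
  ((Commute.one_right A).smul_right μ).add_right (h.smul_right η)

lemma auxSiteR_commute {j j' : ι} {b b' : κ} (hj : j ≠ j') (hb : b ≠ b') (η μ μ' : R) :
    Commute (auxSiteR (α := α) η μ j b) (auxSiteR η μ' j' b') := by
  refine commute_auxSiteR_of_permMatrix (commute_auxSiteR_of_permMatrix ?_ _ _).symm _ _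
  rw [Commute, SemiconjBy, ← permMatrix_mul, ← permMatrix_mul,
    (auxSwap_commute hj.symm hb.symm).eq]

lemma embAux_kroneckerOne_commute_auxSiteR (K : Matrix α α R) {j j' : ι} (hj : j ≠ j') (b : κ)
    (η μ : R) : Commute (embAux j (kroneckerOne (κ → α) K)) (auxSiteR η μ j' b) := by
  refine commute_auxSiteR_of_permMatrix
    (commute_permMatrix_of_invariant fun ⟨u, x⟩ ⟨w, y⟩ => ?_) _ _
  simp only [auxSwap_apply, embAux_apply, kroneckerOne_apply, update_of_ne hj, mul_assoc,
    ite_zero_mul_ite_zero, mul_one]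
  congr 2
  simp only [eq_iff_iff, funext_iff, update_apply]
  grind

end SiteOperators

section Fusion

variable {R ι κ : Type*} [CommRing R] [Fintype ι] [DecidableEq ι] [Fintype κ] [DecidableEq κ]

/-- The vector `ε ⊗ e_y`. -/
def leviVec {Q : Type*} [DecidableEq Q] (y : Q) : (ι → ι) × Q → R :=
  fun p => leviCivita p.1 * if p.2 = y then 1 else 0

lemma kroneckerOne_piTensor_mulVec_leviVec {Q : Type*} [Fintype Q] [DecidableEq Q]
    (A : Matrix ι ι R) (y : Q) :
    kroneckerOne Q (piTensor fun _ => A) *ᵥ leviVec y = A.det • leviVec y := by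
  ext ⟨u, x⟩
  simp [mulVec, dotProduct, Fintype.sum_prod_type, leviVec, piTensor, mul_comm _ (leviCivita _),
    sum_leviCivita_mul_prod, mul_comm A.det]

lemma leviVec_comp_auxSwap_comp_auxSwap {i k : ι} (hik : i ≠ k) (b : κ) (y : κ → ι) :
    (leviVec (R := R) y ∘ auxSwap i b) ∘ auxSwap k b = -(leviVec y ∘ auxSwap i b) := by
  ext ⟨u, x⟩
  have hswap : update (update u k (x b)) i (u k) = update u i (x b) ∘ swap i k := by
    rw [comp_swap_eq_update]
    grind
  simp [leviVec, update_of_ne hik, hswap, leviCivita_comp_swap hik]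
  by_cases h : update x b (u i) = y <;> simp [h]

lemma sum_leviVec_comp_auxSwap_comp_auxSwap {s : Finset ι} {k : ι} (hk : k ∉ s) (b : κ)
    (y : κ → ι) :
    (∑ i ∈ s, leviVec (R := R) y ∘ auxSwap i b) ∘ auxSwap k b =
      -∑ i ∈ s, leviVec y ∘ auxSwap i b := by
  ext p
  simp only [Function.comp_apply, Finset.sum_apply, Pi.neg_apply, ← Finset.sum_neg_distrib]
  exact Finset.sum_congr rfl fun i hi =>
    congrFun (leviVec_comp_auxSwap_comp_auxSwap (ne_of_mem_of_not_mem hi hk) b y) p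

lemma sum_leviVec_comp_auxSwap (b : κ) (y : κ → ι) :
    ∑ i, leviVec (R := R) y ∘ auxSwap i b = leviVec y := by
  ext ⟨u, x⟩
  have hupd (i : ι) : (update x b (u i) = y) ↔ (u i = y b ∧ ∀ c ≠ b, x c = y c) := by
    rw [update_eq_iff]
  have hxy : (x = y) ↔ (x b = y b ∧ ∀ c ≠ b, x c = y c) := by
    rw [← update_eq_iff (f := x) (a := b), update_eq_self]
  have hsplit (P Q : Prop) [Decidable P] [Decidable Q] :
      (if P ∧ Q then (1 : R) else 0) = (if P then 1 else 0) * (if Q then 1 else 0) := by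
    rw [ite_zero_mul_ite_zero, mul_one]
  simp only [Finset.sum_apply, Function.comp_apply, auxSwap_apply, leviVec, hupd, hxy, hsplit]
  calc _ = (∑ i, (if u i = y b then 1 else 0) * leviCivita (update u i (x b))) *
        (if ∀ c ≠ b, x c = y c then (1 : R) else 0) := by
        rw [Finset.sum_mul]
        exact Finset.sum_congr rfl fun i _ => by ring
    _ = _ := by rw [sum_ite_mul_leviCivita_update]; ring

lemma prod_drop_auxSiteR_mulVec_leviVec {n : ℕ} (η μ : R) (b : κ) (y : κ → Fin n) {k : ℕ}
    (hk : k ≤ n) :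
    ((List.ofFn fun j : Fin n => auxSiteR η (μ - (j : ℕ) * η) j b).drop k).prod *ᵥ leviVec y =
      (∏ r ∈ Finset.Ico k n, (μ - r * η)) • leviVec y +
        (η * ∏ r ∈ Finset.Ico (k + 1) n, (μ - r * η)) •
          ∑ i ∈ Finset.univ.filter (fun i : Fin n => k ≤ i), leviVec y ∘ auxSwap i b := by
  induction hk using Nat.decreasingInduction with
  | self =>
    have hempty : Finset.univ.filter (fun i : Fin n => n ≤ i) = ∅ := by
      ext i
      simp [i.isLt]
    simp [List.drop_of_length_le, hempty]
  | of_succ k hk ih =>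
    set L : (Fin n → Fin n) × (κ → Fin n) → R := leviVec y
    set S := ∑ i ∈ Finset.univ.filter (fun i : Fin n => k + 1 ≤ i), L ∘ auxSwap i b
    set c := ∏ r ∈ Finset.Ico (k + 1) n, (μ - r * η)
    set c' := ∏ r ∈ Finset.Ico (k + 2) n, (μ - r * η)
    have hsplit : Finset.univ.filter (fun i : Fin n => k ≤ i) =
        insert ⟨k, hk⟩ (Finset.univ.filter (fun i : Fin n => k + 1 ≤ i)) := by
      ext i
      simp [Fin.ext_iff]
      omega
    have hS : ∑ i ∈ Finset.univ.filter (fun i : Fin n => k ≤ i), L ∘ auxSwap i b =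
        L ∘ auxSwap ⟨k, hk⟩ b + S := by
      rw [hsplit, Finset.sum_insert (by simp)]
    have hflip : S ∘ auxSwap ⟨k, hk⟩ b = -S := sum_leviVec_comp_auxSwap_comp_auxSwap (by simp) b y
    have hc : ∏ r ∈ Finset.Ico k n, (μ - r * η) = (μ - (k : R) * η) * c :=
      Finset.prod_eq_prod_Ico_succ_bot hk _
    -- For `k + 1 = n` the sum `S` is empty while `c = 1`.
    have hc' : ((μ - (k : R) * η - η) * c') • S = c • S := by
      by_cases hk' : k + 1 < n
      · rw [show c = (μ - ((k + 1 : ℕ) : R) * η) * c' from Finset.prod_eq_prod_Ico_succ_bot hk' _]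
        push_cast
        ring_nf
      · have hS0 : S = 0 := Finset.sum_eq_zero fun i hi => by simp at hi; omega
        simp [hS0]
    have hcomp : (c • L + (η * c') • S) ∘ auxSwap ⟨k, hk⟩ b =
        c • (L ∘ auxSwap ⟨k, hk⟩ b) + (η * c') • (S ∘ auxSwap ⟨k, hk⟩ b) := rfl
    rw [List.drop_eq_getElem_cons (by simpa using hk), List.prod_cons, List.getElem_ofFn,
      ← mulVec_mulVec, ih, auxSiteR_mulVec, hS, hc, hcomp, hflip, Fin.val_mk]
    linear_combination (norm := module) η • hc'

lemma prod_auxSiteR_mulVec_leviVec {n : ℕ} (hn : 0 < n) (η μ : R) (b : κ) (y : κ → Fin n) :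
    (List.ofFn fun j : Fin n => auxSiteR η (μ - (j : ℕ) * η) j b).prod *ᵥ leviVec y =
      ((μ + η) * ∏ m ∈ Finset.Icc 1 (n - 1), (μ - m * η)) • leviVec y := by
  have h := prod_drop_auxSiteR_mulVec_leviVec η μ b y (Nat.zero_le n)
  rw [List.drop_zero] at h
  have hIco : Finset.Ico 1 n = Finset.Icc 1 (n - 1) := by
    rw [← Finset.Ico_add_one_right_eq_Icc]
    congr 1
    omega
  rw [h, Finset.filter_true_of_mem (fun i _ => Nat.zero_le _), sum_leviVec_comp_auxSwap,
    Finset.prod_eq_prod_Ico_succ_bot hn, zero_add, hIco]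
  push_cast
  module

end Fusion

section Monodromy

variable {n N : ℕ} (η : ℂ) (ξ : Fin N → ℂ) (K : Matrix (Fin n) (Fin n) ℂ)

lemma embAux_Raux {ι : Type*} [Fintype ι] [DecidableEq ι] (μ : ℂ) (j : ι) (b : Fin N) :
    embAux j (Raux n N η μ b) = auxSiteR η μ j b := by
  ext ⟨u, x⟩ ⟨w, y⟩
  simp [Raux, auxSiteR, Rmat, permOp, Finset.prod_boole, one_apply]
  simp only [funext_iff, update_apply]
  split_ifs <;> grind

lemma MauxJ_eq {m : ℕ} (j : Fin m) (lam : ℂ) :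
    MauxJ n N η ξ K m j lam = embAux j (kroneckerOne _ K) *
      (List.ofFn fun b : Fin N => auxSiteR η (lam - ξ b.rev) j b.rev).prod := by
  have hM : MauxJ n N η ξ K m j lam = embAux j (monodromy n N η ξ K lam) := by
    ext ⟨u, x⟩ ⟨w, y⟩
    simp [MauxJ, Finset.prod_boole]
  have hK : Kaux n N K = kroneckerOne _ K := by
    ext ⟨a, x⟩ ⟨b, y⟩
    simp [Kaux]
  rw [hM, monodromy, map_mul, map_list_prod, List.map_ofFn, hK]
  simp [Function.comp_def, embAux_Raux]

lemma prod_MauxJ_eq (lam : ℂ) :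
    (List.ofFn fun j : Fin n => MauxJ n N η ξ K n j (lam - (j : ℕ) * η)).prod =
      kroneckerOne _ (piTensor fun _ => K) *
        (List.ofFn fun b : Fin N => (List.ofFn fun j : Fin n =>
          auxSiteR η (lam - ξ b.rev - (j : ℕ) * η) j b.rev).prod).prod := by
  simp_rw [MauxJ_eq, sub_right_comm lam]
  rw [← List.prod_ofFn_mul_prod_ofFn, List.prod_ofFn_prod_ofFn_comm, prod_embAux_kroneckerOne]
  · exact fun j j' b b' hj hb => auxSiteR_commute hj (Fin.rev_injective.ne hb) _ _ _
  · exact fun j j' hj => Commute.list_prod_left _ _ fun a ha => by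
      obtain ⟨b, rfl⟩ := List.mem_ofFn.mp ha
      exact (embAux_kroneckerOne_commute_auxSiteR K hj.symm _ _ _).symm

lemma prod_MauxJ_mulVec_leviVec (hn : 1 ≤ n) (lam : ℂ) (y : Fin N → Fin n) :
    (List.ofFn fun j : Fin n => MauxJ n N η ξ K n j (lam - (j : ℕ) * η)).prod *ᵥ leviVec y =
      qdet n N η ξ K lam • leviVec y := by
  rw [prod_MauxJ_eq, ← mulVec_mulVec,
    List.prod_ofFn_mulVec fun b => prod_auxSiteR_mulVec_leviVec hn η _ _ y, mulVec_smul,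
    kroneckerOne_piTensor_mulVec_leviVec, smul_smul, qdet, mul_comm]
  congr 2
  exact Fintype.prod_equiv Fin.revPerm _ _ fun _ => rfl

end Monodromy

lemma antisym_apply (n : ℕ) (v w : Fin n → Fin n) :
    antisym n n v w = (n.factorial : ℂ)⁻¹ * (leviCivita v * leviCivita w) := by
  simp [antisym, permTensorOp, Matrix.sum_apply, ← sum_sign_mul_ite_comp]

lemma sum_antisymH_mul_apply {n N : ℕ}
    (P : Matrix ((Fin n → Fin n) × (Fin N → Fin n)) ((Fin n → Fin n) × (Fin N → Fin n)) ℂ)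
    (x y : Fin N → Fin n) :
    ∑ v, (antisymH n N n * P) (v, x) (v, y) =
      (n.factorial : ℂ)⁻¹ * ∑ p, leviCivita p * (P *ᵥ leviVec y) (p, x) := by
  simp [mul_apply, Fintype.sum_prod_type, antisymH, antisym_apply, mulVec, dotProduct, leviVec,
    Finset.mul_sum]
  rw [Finset.sum_comm]
  exact Finset.sum_congr rfl fun p _ => Finset.sum_congr rfl fun v _ => by ring

theorem qdet_explicit_general (n N : ℕ) (hn : 1 ≤ n) (η : ℂ) (ξ : Fin N → ℂ)
    (K : Matrix (Fin n) (Fin n) ℂ) (lam : ℂ) :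
    transfer n N η ξ K n lam =
      qdet n N η ξ K lam • (1 : Matrix (Fin N → Fin n) (Fin N → Fin n) ℂ) := by
  ext x y
  rw [transfer, of_apply, sum_antisymH_mul_apply, prod_MauxJ_mulVec_leviVec η ξ K hn]
  have hsummand (p : Fin n → Fin n) : leviCivita p * (qdet n N η ξ K lam • leviVec y) (p, x) =
      qdet n N η ξ K lam * (if x = y then 1 else 0) * (leviCivita p * leviCivita p) := by
    simp only [Pi.smul_apply, leviVec, smul_eq_mul]
    ring
  have hfact : (n.factorial : ℂ) ≠ 0 := Nat.cast_ne_zero.mpr n.factorial_ne_zero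
  simp only [hsummand, ← Finset.mul_sum, sum_leviCivita_mul_self, Fintype.card_fin,
    Matrix.smul_apply, one_apply, smul_eq_mul]
  field_simp

/-- the quantum determinant is the explicit central scalar function. -/
theorem qdet_explicit (n N : ℕ) (hn : 1 ≤ n) (hN : 1 ≤ N) (η : ℂ) (ξ : Fin N → ℂ)
    (K : Matrix (Fin n) (Fin n) ℂ) (lam : ℂ) :
    transfer n N η ξ K n lam =
      qdet n N η ξ K lam • (1 : Matrix (Fin N → Fin n) (Fin N → Fin n) ℂ) :=
  qdet_explicit_general n N hn η ξ K lam

end GLnSoV
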